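/- arXiv:2308.16513 — 3 statements merged into one kernel-verified Lean document; each statement's English description precedes it below -/
import Mathlib

section
/- Let 𝔤 be a finite-dimensional Lie algebra with a nondegenerate symmetric bilinear form g, and suppose x₀ ≠ 0 is an idempotent of the Euler–Arnold equation, i.e. ad_{x₀}^† x₀ = x₀ where † is the g-adjoint. Then ad_{x₀} has an eigenvector with eigenvalue 1: there exists y₀ ≠ 0 with [x₀, y₀] = y₀. -/
/-!
The functional `g x₀` is nonzero by nondegeneracy, and the idempotency condition says it is
fixed by the transpose of `ad x₀`. So `y ↦ y - ⁅x₀, y⁆` takes values in the hyperplane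
`ker (g x₀)`; it is not surjective, hence, in finite dimension, not injective.
-/

theorem Module.End.exists_ne_zero_apply_eq_self_of_dual_comp_eq {K V : Type*} [Field K]
    [AddCommGroup V] [Module K V] [FiniteDimensional K V] (f : Module.End K V)
    (φ : Module.Dual K V) (hφ : φ ≠ 0) (hfix : φ ∘ₗ f = φ) :
    ∃ v : V, v ≠ 0 ∧ f v = v := by
  have not_surjective : ¬ Function.Surjective (LinearMap.id - f : Module.End K V) := by
    intro hsurj
    refine hφ (LinearMap.ext fun w => ?_)
    obtain ⟨v, rfl⟩ := hsurj w
    change φ (v - f v) = 0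
    rw [map_sub, ← LinearMap.comp_apply φ f, hfix, sub_self]
  obtain ⟨v, hv, hv0⟩ : ∃ v, (LinearMap.id - f : Module.End K V) v = 0 ∧ v ≠ 0 := by
    rw [← LinearMap.injective_iff_surjective, injective_iff_map_eq_zero] at not_surjective
    push Not at not_surjective
    exact not_surjective
  exact ⟨v, hv0, (sub_eq_zero.mp hv).symm⟩

theorem stmt15_general {𝔤 : Type*} [LieRing 𝔤] [LieAlgebra ℝ 𝔤] [FiniteDimensional ℝ 𝔤]
    (g : 𝔤 →ₗ[ℝ] 𝔤 →ₗ[ℝ] ℝ)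
    (hg_nondeg : ∀ u : 𝔤, (∀ v : 𝔤, g u v = 0) → u = 0)
    (x₀ : 𝔤) (hx₀ : x₀ ≠ 0)
    (hidem : ∀ y : 𝔤, g x₀ ⁅x₀, y⁆ = g x₀ y) :
    ∃ y₀ : 𝔤, y₀ ≠ 0 ∧ ⁅x₀, y₀⁆ = y₀ := by
  have hgx₀ : g x₀ ≠ 0 := fun h => hx₀ (hg_nondeg x₀ fun v => by rw [h, LinearMap.zero_apply])
  exact (LieAlgebra.ad ℝ 𝔤 x₀).exists_ne_zero_apply_eq_self_of_dual_comp_eq (g x₀) hgx₀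
    (LinearMap.ext hidem)

/-- Let `𝔤` be a finite-dimensional real Lie algebra with a
nondegenerate symmetric bilinear form `g`, and let `x₀ ≠ 0` be an idempotent of the
Euler–Arnold equation, i.e. `ad_{x₀}^† x₀ = x₀`, which unfolds (via the definition
`g(ad_{x₀}^† u, v) = g(u, ⁅x₀, v⁆)`) to `g(x₀, ⁅x₀, y⁆) = g(x₀, y)` for all `y`.
Then `ad_{x₀}` has an eigenvector with eigenvalue `1`: there is `y₀ ≠ 0` with
`⁅x₀, y₀⁆ = y₀`. -/
theorem stmt15 {𝔤 : Type*} [LieRing 𝔤] [LieAlgebra ℝ 𝔤] [FiniteDimensional ℝ 𝔤]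
    (g : 𝔤 →ₗ[ℝ] 𝔤 →ₗ[ℝ] ℝ)
    (hg_symm : ∀ u v : 𝔤, g u v = g v u)
    (hg_nondeg : ∀ u : 𝔤, (∀ v : 𝔤, g u v = 0) → u = 0)
    (x₀ : 𝔤) (hx₀ : x₀ ≠ 0)
    (hidem : ∀ y : 𝔤, g x₀ ⁅x₀, y⁆ = g x₀ y) :
    ∃ y₀ : 𝔤, y₀ ≠ 0 ∧ ⁅x₀, y₀⁆ = y₀ :=
  stmt15_general g hg_nondeg x₀ hx₀ hidem
end

section
/- Let G be a Lie group whose Lie algebra admits, for some nondegenerate symmetric bilinear form, an idempotent x₀ (i.e. ad_{x₀}^† x₀ = x₀ with ‖x₀‖ = 1 for some auxiliary left-invariant Riemannian metric). Then G has exponential growth along the curve p(t) = exp(t·x₀): there exists y₀ ≠ 0 with ‖Ad_{p(t)}(y₀)‖ = e^t·‖y₀‖ and d_R(1, p(t)) ≤ t for t ≥ 0, hence ‖Ad_{p(t)}(y₀)‖ ≥ e^{d_R(1,p(t))}·‖y₀‖. -/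
open NormedSpace

lemma exp_apply_eigenvector {𝔤 : Type*} [NormedAddCommGroup 𝔤] [NormedSpace ℝ 𝔤]
    [CompleteSpace 𝔤] (A : 𝔤 →L[ℝ] 𝔤) (y : 𝔤) (c : ℝ) (h : A y = c • y) :
    NormedSpace.exp A y = Real.exp c • y := by
  have hpow : ∀ n : ℕ, (A ^ n) y = c ^ n • y := by
    intro n
    induction n with
    | zero => simp
    | succ n ih =>
      rw [pow_succ, pow_succ]
      simp only [ContinuousLinearMap.mul_apply, ih, map_smul, h, smul_smul]
      ring_nf
  have hs : Summable fun n : ℕ => (((n.factorial : ℝ)⁻¹) • A ^ n) :=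
    NormedSpace.expSeries_summable' A
  have : NormedSpace.exp A y = ∑' n : ℕ, (((n.factorial : ℝ)⁻¹) • A ^ n) y := by
    rw [NormedSpace.exp_eq_tsum ℝ]
    exact ((ContinuousLinearMap.apply ℝ 𝔤 y).map_tsum hs)
  rw [this]
  have h2 : ∀ n : ℕ, (((n.factorial : ℝ)⁻¹) • A ^ n) y = (((n.factorial : ℝ)⁻¹) * c ^ n) • y := by
    intro n
    simp [hpow n, smul_smul]
  simp_rw [h2]
  rw [Summable.tsum_smul_const]
  · congr 1
    rw [Real.exp_eq_exp_ℝ, NormedSpace.exp_eq_tsum ℝ]; simp [smul_eq_mul]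
  · exact (Real.summable_pow_div_factorial c).congr (by
      intro n; rw [div_eq_inv_mul])

/-- Let `G` be a Lie group whose Lie algebra `𝔤` (with bracket a
bilinear map, inner product norm, exponential `exp : 𝔤 → G` with
`Ad_{exp v} = exp(ad_v)` and left-invariant Riemannian distance `d`, so that
`d(1, exp v) ≤ ‖v‖`) admits an idempotent `x₀` for some nondegenerate symmetric
bilinear form `B` (`ad_{x₀}^† x₀ = x₀`, i.e. `B(x₀, ⁅x₀,y⁆) = B(x₀,y)` for all `y`),
with `‖x₀‖ = 1`. Then `G` has exponential growth along `p(t) = exp(t·x₀)`: there is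
`y₀ ≠ 0` with `‖Ad_{p(t)}(y₀)‖ = e^t·‖y₀‖` and `d(1, p(t)) ≤ t` for `t ≥ 0`, hence
`‖Ad_{p(t)}(y₀)‖ ≥ e^{d(1,p(t))}·‖y₀‖`. -/
theorem stmt16 {G : Type*} [Group G]
    {𝔤 : Type*} [NormedAddCommGroup 𝔤] [InnerProductSpace ℝ 𝔤] [FiniteDimensional ℝ 𝔤]
    (bracket : 𝔤 →ₗ[ℝ] 𝔤 →ₗ[ℝ] 𝔤)
    (hskew : ∀ x : 𝔤, bracket x x = 0)
    (hjacobi : ∀ x y z : 𝔤,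
      bracket x (bracket y z) + bracket y (bracket z x) + bracket z (bracket x y) = 0)
    (B : 𝔤 →ₗ[ℝ] 𝔤 →ₗ[ℝ] ℝ)
    (hB_symm : ∀ u v : 𝔤, B u v = B v u)
    (hB_nondeg : ∀ u : 𝔤, (∀ v : 𝔤, B u v = 0) → u = 0)
    (x₀ : 𝔤) (hx₀_ne : x₀ ≠ 0) (hx₀_norm : ‖x₀‖ = 1)
    (hidem : ∀ y : 𝔤, B x₀ (bracket x₀ y) = B x₀ y)
    (expG : 𝔤 → G) (Ad : G → (𝔤 →L[ℝ] 𝔤)) (d : G → G → ℝ)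
    (hAd : ∀ v : 𝔤, Ad (expG v) =
      NormedSpace.exp (LinearMap.toContinuousLinearMap (bracket v)))
    (hd : ∀ v : 𝔤, d 1 (expG v) ≤ ‖v‖) :
    ∃ y₀ : 𝔤, y₀ ≠ 0 ∧ ∀ t : ℝ, 0 ≤ t →
      ‖Ad (expG (t • x₀)) y₀‖ = Real.exp t * ‖y₀‖ ∧
      d 1 (expG (t • x₀)) ≤ t ∧
      Real.exp (d 1 (expG (t • x₀))) * ‖y₀‖ ≤ ‖Ad (expG (t • x₀)) y₀‖ := by
  -- Find an eigenvector of ad_{x₀} with eigenvalue 1.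
  set T : 𝔤 →ₗ[ℝ] 𝔤 := bracket x₀ - LinearMap.id with hT
  have hTnotinj : ¬ Function.Injective T := by
    intro hinj
    have hsurj : Function.Surjective T := (LinearMap.injective_iff_surjective).mp hinj
    have : ∀ v : 𝔤, B x₀ v = 0 := by
      intro v
      obtain ⟨y, hy⟩ := hsurj v
      have : B x₀ (T y) = 0 := by
        simp only [hT, LinearMap.sub_apply, LinearMap.id_apply, map_sub]
        rw [hidem y]; ring
      rwa [hy] at this
    exact hx₀_ne (hB_nondeg x₀ this)
  obtain ⟨y₀, hy₀mem, hy₀ne⟩ : ∃ y₀, y₀ ∈ LinearMap.ker T ∧ y₀ ≠ 0 := by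
    by_contra h
    push_neg at h
    apply hTnotinj
    rw [← LinearMap.ker_eq_bot]
    exact (Submodule.eq_bot_iff _).mpr fun x hx => by
      by_contra hne; exact hne (by_contra fun h' => h' (h x hx ▸ rfl)) |>.elim
  have heig : bracket x₀ y₀ = y₀ := by
    have := LinearMap.mem_ker.mp hy₀mem
    simpa [hT, sub_eq_zero] using this
  refine ⟨y₀, hy₀ne, fun t ht => ?_⟩
  have hAdapp : Ad (expG (t • x₀)) y₀ = Real.exp t • y₀ := by
    rw [hAd]
    apply exp_apply_eigenvector
    simp [map_smul, heig]
  have hnorm : ‖Ad (expG (t • x₀)) y₀‖ = Real.exp t * ‖y₀‖ := by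
    rw [hAdapp, norm_smul, Real.norm_eq_abs, abs_of_pos (Real.exp_pos t)]
  have hdle : d 1 (expG (t • x₀)) ≤ t := by
    calc d 1 (expG (t • x₀)) ≤ ‖t • x₀‖ := hd _
      _ = |t| * ‖x₀‖ := by rw [norm_smul, Real.norm_eq_abs]
      _ = t := by rw [hx₀_norm, mul_one, abs_of_nonneg ht]
  refine ⟨hnorm, hdle, ?_⟩
  rw [hnorm]
  exact mul_le_mul_of_nonneg_right (Real.exp_le_exp.mpr hdle) (norm_nonneg y₀)
end

section
/- On the half-plane {(x,y) : x > 0}, the curve γ(t) = (cosh t, sinh t), t ≥ 0, is diverging and has finite length for the Riemannian metric h = x^{-4}(x²dx² + (1+y²)dy² − xy(dxdy + dydx)); specifically h(γ'(t), γ'(t)) = 1/cosh²(t) and the total length is ∫₀^∞ dt/cosh t ≤ 2. Hence h is an incomplete Riemannian metric. -/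
/-- The Clairaut metric `h = x⁻⁴(x²dx² + (1+y²)dy² − xy(dxdy+dydx))` on the
half-plane, as a quadratic form on tangent vectors: `hMinus p v` is `h_p(v,v)`. -/
noncomputable def hMinus (p v : ℝ × ℝ) : ℝ :=
  (p.1 ^ 2 * v.1 ^ 2 + (1 + p.2 ^ 2) * v.2 ^ 2 - 2 * (p.1 * p.2) * (v.1 * v.2)) / p.1 ^ 4

/-- Length of a curve for the metric `hMinus`. -/
noncomputable def lenMinus (c : ℝ → ℝ × ℝ) (a b : ℝ) : ℝ :=
  ∫ t in a..b, Real.sqrt (hMinus (c t) (deriv c t))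

/-- Distance on the half-plane `{x > 0}` induced by `hMinus`: infimum of lengths of
C¹ curves staying in the half-plane. -/
noncomputable def distMinus (x y : ℝ × ℝ) : ℝ :=
  sInf {L : ℝ | ∃ c : ℝ → ℝ × ℝ, ∃ a b : ℝ, a ≤ b ∧ c a = x ∧ c b = y ∧
    (∀ t : ℝ, 0 < (c t).1) ∧ ContDiff ℝ 1 c ∧ L = lenMinus c a b}

/-- Completeness of `hMinus` on the half-plane: every Cauchy sequence for the induced
distance converges in the half-plane. -/
def CompleteMinus : Prop :=
  ∀ u : ℕ → ℝ × ℝ, (∀ n, 0 < (u n).1) →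
    (∀ ε : ℝ, 0 < ε → ∃ N : ℕ, ∀ m ≥ N, ∀ n ≥ N, distMinus (u m) (u n) < ε) →
    ∃ x : ℝ × ℝ, 0 < x.1 ∧ ∀ ε : ℝ, 0 < ε → ∃ N : ℕ, ∀ n ≥ N, distMinus (u n) x < ε

/-- The curve `γ(t) = (cosh t, sinh t)`. -/
noncomputable def γ17 : ℝ → ℝ × ℝ := fun t => (Real.cosh t, Real.sinh t)

lemma phi_hasDeriv (k u : ℝ) :
    HasDerivAt (fun u : ℝ => k * max 0 u ^ 2) (k * (2 * max 0 u)) u := by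
  have base : HasDerivAt (fun u : ℝ => max 0 u ^ 2) (2 * max 0 u) u := by
    rcases lt_trichotomy u 0 with h | h | h
    · have he : (fun u : ℝ => max 0 u ^ 2) =ᶠ[nhds u] fun _ => 0 := by
        filter_upwards [Filter.Tendsto.eventually_lt_const h (Filter.tendsto_id (x := nhds u))] with x hx
        have : (x:ℝ) < 0 := hx
        simp [max_eq_left this.le]
      rw [he.hasDerivAt_iff]
      simpa [max_eq_left h.le] using (hasDerivAt_const u (0:ℝ))
    · subst h
      rw [hasDerivAt_iff_isLittleO]
      simp only [max_self, ne_eq, OfNat.ofNat_ne_zero, not_false_eq_true, zero_pow, mul_zero,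
        sub_zero, sub_self, smul_zero]
      rw [Asymptotics.isLittleO_iff]
      intro c hc
      filter_upwards [eventually_abs_sub_lt 0 hc] with x hx
      have hx' : |x| < c := by simpa using hx
      have h1 : ‖max 0 x ^ 2‖ ≤ x ^ 2 := by
        rw [Real.norm_eq_abs, abs_of_nonneg (by positivity)]
        rcases le_or_gt x 0 with h2 | h2
        · simp [max_eq_left h2]; positivity
        · rw [max_eq_right h2.le]
      calc ‖max 0 x ^ 2‖ ≤ x ^ 2 := h1
        _ = |x| * |x| := by rw [← sq_abs]; ring
        _ ≤ c * ‖x‖ := by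
            have := abs_nonneg x
            rw [Real.norm_eq_abs]
            nlinarith
    · have he : (fun u : ℝ => max 0 u ^ 2) =ᶠ[nhds u] fun x => x ^ 2 := by
        filter_upwards [Filter.Tendsto.eventually_const_lt h (Filter.tendsto_id (x := nhds u))] with x hx
        have : (0:ℝ) < x := hx
        simp [max_eq_right this.le]
      rw [he.hasDerivAt_iff]
      have := hasDerivAt_pow 2 u
      norm_num at this
      simpa [max_eq_right h.le, mul_comm] using this
  simpa [mul_assoc] using base.const_mul k

lemma sech_cont : Continuous (fun t : ℝ => 1 / Real.cosh t) :=
  continuous_const.div Real.continuous_cosh (fun t => (Real.cosh_pos t).ne')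

lemma sech_le (t : ℝ) : 1 / Real.cosh t ≤ 2 * Real.exp (-t) := by
  rw [Real.cosh_eq, div_le_iff₀ (by positivity)]
  have h1 := Real.exp_pos t
  have h2 := Real.exp_pos (-t)
  have h3 : Real.exp (-t) * Real.exp t = 1 := by
    rw [← Real.exp_add]; simp
  nlinarith

lemma int_sech_le {a b : ℝ} (hab : a ≤ b) :
    ∫ t in a..b, 1 / Real.cosh t ≤ 2 * Real.exp (-a) := by
  have h1 : ∫ t in a..b, 1 / Real.cosh t ≤ ∫ t in a..b, 2 * Real.exp (-t) := by
    apply intervalIntegral.integral_mono_on hab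
      (sech_cont.intervalIntegrable a b)
      ((continuous_const.mul (Real.continuous_exp.comp continuous_neg)).intervalIntegrable a b)
    exact fun t _ => sech_le t
  have h2 : ∫ t in a..b, 2 * Real.exp (-t) = 2 * (Real.exp (-a) - Real.exp (-b)) := by
    rw [intervalIntegral.integral_const_mul, intervalIntegral.integral_comp_neg Real.exp,
      integral_exp]
  have := (Real.exp_pos (-b)).le
  linarith [h1, h2.le, h2.ge]

lemma hMinus_nonneg (p v : ℝ × ℝ) (hp : 0 < p.1) : 0 ≤ hMinus p v := by
  unfold hMinus
  apply div_nonneg _ (by positivity)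
  nlinarith [sq_nonneg (p.1 * v.1 - p.2 * v.2), sq_nonneg v.2]

section LowerBound

variable (p : ℝ × ℝ)

noncomputable def rr : ℝ := (p.1 / 2) ^ 2
noncomputable def CC : ℝ := (8 * (1 + (|p.2| + p.1 / 2) ^ 2) + p.1 ^ 2) * (3 * p.1 / 2) ^ 4 / p.1 ^ 2
noncomputable def kk : ℝ := 1 / (2 * rr p * Real.sqrt (4 * rr p * CC p))
noncomputable def δδ : ℝ := kk p * rr p ^ 2

lemma rr_pos (hp : 0 < p.1) : 0 < rr p := by unfold rr; positivity
lemma CC_pos (hp : 0 < p.1) : 0 < CC p := by unfold CC; positivity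
lemma kk_pos (hp : 0 < p.1) : 0 < kk p := by
  unfold kk
  have := rr_pos p hp
  have := CC_pos p hp
  positivity
lemma δδ_pos (hp : 0 < p.1) : 0 < δδ p := by
  unfold δδ; have := kk_pos p hp; have := rr_pos p hp; positivity

/-- The key quadratic-form lower bound inside the ball. -/
lemma key_quad (hp : 0 < p.1) (X Y A B : ℝ)
    (hX : (X - p.1) ^ 2 ≤ rr p) (hY : (Y - p.2) ^ 2 ≤ rr p) :
    A ^ 2 + B ^ 2 ≤ CC p * (((X * A - Y * B) ^ 2 + B ^ 2) / X ^ 4) := by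
  set u := X * A - Y * B with hu
  have hX1 : p.1 / 2 ≤ X := by
    nlinarith [abs_le_of_sq_le_sq' (by simpa [rr] using hX) (by positivity : (0:ℝ) ≤ p.1/2)]
  have hX2 : X ≤ 3 * p.1 / 2 := by
    nlinarith [abs_le_of_sq_le_sq' (by simpa [rr] using hX) (by positivity : (0:ℝ) ≤ p.1/2)]
  have hXpos : 0 < X := lt_of_lt_of_le (by positivity) hX1
  have hY1 : |Y| ≤ |p.2| + p.1 / 2 := by
    have h2 : |Y - p.2| ≤ p.1 / 2 :=
      abs_le.mpr (abs_le_of_sq_le_sq' (by simpa [rr] using hY) (by positivity))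
    calc |Y| = |p.2 + (Y - p.2)| := by ring_nf
      _ ≤ |p.2| + |Y - p.2| := abs_add_le _ _
      _ ≤ |p.2| + p.1 / 2 := by linarith
  -- step 1 : p₁² (A² + B²) ≤ (8(1+Y₀²)+p₁²) (u² + B²)
  set Y₀ := |p.2| + p.1 / 2 with hY₀
  have hY₀0 : 0 ≤ Y₀ := by positivity
  have step1 : p.1 ^ 2 * (A ^ 2 + B ^ 2) ≤ (8 * (1 + Y₀ ^ 2) + p.1 ^ 2) * (u ^ 2 + B ^ 2) := by
    have hXA : X * A = u + Y * B := by rw [hu]; ring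
    have h1 : p.1 ^ 2 * A ^ 2 ≤ 4 * (X * A) ^ 2 := by
      nlinarith [mul_nonneg (show (0:ℝ) ≤ 4 * X ^ 2 - p.1 ^ 2 by nlinarith) (sq_nonneg A)]
    have h2 : (X * A) ^ 2 ≤ 2 * u ^ 2 + 2 * Y ^ 2 * B ^ 2 := by
      rw [hXA]; nlinarith [sq_nonneg (u - Y * B)]
    have h3 : Y ^ 2 ≤ Y₀ ^ 2 := by nlinarith [abs_nonneg Y, sq_abs Y]
    nlinarith [sq_nonneg u, sq_nonneg B]
  -- step 2 : assemble
  have hX4 : X ^ 4 ≤ (3 * p.1 / 2) ^ 4 := pow_le_pow_left₀ hXpos.le hX2 4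
  have hX4pos : 0 < X ^ 4 := by positivity
  have hnum : 0 ≤ u ^ 2 + B ^ 2 := by positivity
  have hdiv : (u ^ 2 + B ^ 2) / X ^ 4 * X ^ 4 = u ^ 2 + B ^ 2 := by field_simp
  have hq : (u ^ 2 + B ^ 2) ≤ ((u ^ 2 + B ^ 2) / X ^ 4) * (3 * p.1 / 2) ^ 4 := by
    rw [div_mul_eq_mul_div, le_div_iff₀ hX4pos]
    nlinarith [div_nonneg hnum hX4pos.le]
  have hp2 : 0 < p.1 ^ 2 := by positivity
  have hgoal : (A ^ 2 + B ^ 2) * p.1 ^ 2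
      ≤ (8 * (1 + Y₀ ^ 2) + p.1 ^ 2) * (3 * p.1 / 2) ^ 4 * ((u ^ 2 + B ^ 2) / X ^ 4) :=
    calc (A ^ 2 + B ^ 2) * p.1 ^ 2 ≤ (8 * (1 + Y₀ ^ 2) + p.1 ^ 2) * (u ^ 2 + B ^ 2) := by linarith
      _ ≤ (8 * (1 + Y₀ ^ 2) + p.1 ^ 2) * (((u ^ 2 + B ^ 2) / X ^ 4) * (3 * p.1 / 2) ^ 4) := by
          apply mul_le_mul_of_nonneg_left hq (by positivity)
      _ = (8 * (1 + Y₀ ^ 2) + p.1 ^ 2) * (3 * p.1 / 2) ^ 4 * ((u ^ 2 + B ^ 2) / X ^ 4) := by ring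
  rw [CC, ← hY₀, div_mul_eq_mul_div, le_div_iff₀ hp2]
  linarith

end LowerBound

section LB2
variable (p : ℝ × ℝ)

lemma len_lower (hp : 0 < p.1) (q : ℝ × ℝ)
    (hq : rr p ≤ (q.1 - p.1) ^ 2 + (q.2 - p.2) ^ 2)
    (c : ℝ → ℝ × ℝ) (a b : ℝ) (hab : a ≤ b) (hca : c a = q) (hcb : c b = p)
    (hposx : ∀ t, 0 < (c t).1) (hc : ContDiff ℝ 1 c) :
    δδ p ≤ lenMinus c a b := by
  have hr := rr_pos p hp
  have hC := CC_pos p hp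
  have hk := kk_pos p hp
  set k := kk p with hkdef
  set r := rr p with hrdef
  -- curve data
  have hdc : ∀ t, HasDerivAt c (deriv c t) t :=
    fun t => ((hc.differentiable one_ne_zero) t).hasDerivAt
  have hX : ∀ t, HasDerivAt (fun s => (c s).1) (deriv c t).1 t := by
    intro t
    have := ((hdc t).hasFDerivAt.fst).hasDerivAt
    simpa using this
  have hY : ∀ t, HasDerivAt (fun s => (c s).2) (deriv c t).2 t := by
    intro t
    have := ((hdc t).hasFDerivAt.snd).hasDerivAt
    simpa using this
  -- the auxiliary function
  set Q : ℝ → ℝ := fun t => ((c t).1 - p.1) ^ 2 + ((c t).2 - p.2) ^ 2 with hQdef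
  set D : ℝ → ℝ := fun t =>
    2 * ((c t).1 - p.1) * (deriv c t).1 + 2 * ((c t).2 - p.2) * (deriv c t).2 with hDdef
  set f : ℝ → ℝ := fun t => k * max 0 (r - Q t) ^ 2 with hfdef
  set g : ℝ → ℝ := fun t => k * (2 * max 0 (r - Q t)) * (-(D t)) with hgdef
  have hQ' : ∀ t, HasDerivAt Q (D t) t := by
    intro t
    have h1 := (((hX t).sub_const p.1).pow 2)
    have h2 := (((hY t).sub_const p.2).pow 2)
    have := h1.add h2
    exact (this.congr_deriv (by push_cast; ring) :
      HasDerivAt _ (2 * ((c t).1 - p.1) * (deriv c t).1 + 2 * ((c t).2 - p.2) * (deriv c t).2) t)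
  have hf' : ∀ t, HasDerivAt f (g t) t := by
    intro t
    have hinner : HasDerivAt (fun s => r - Q s) (-(D t)) t := (hQ' t).const_sub r
    have := (phi_hasDeriv k (r - Q t)).comp t hinner
    exact (this.congr_deriv (by ring) : HasDerivAt _ (k * (2 * max 0 (r - Q t)) * (-(D t))) t)
  -- continuity facts
  have hcc : Continuous c := hc.continuous
  have hcd : Continuous (deriv c) := hc.continuous_deriv le_rfl
  have hQc : Continuous Q :=
    (((continuous_fst.comp hcc).sub continuous_const).pow 2).add
      (((continuous_snd.comp hcc).sub continuous_const).pow 2)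
  have hDc : Continuous D :=
    ((continuous_const.mul ((continuous_fst.comp hcc).sub continuous_const)).mul
      (continuous_fst.comp hcd)).add
    ((continuous_const.mul ((continuous_snd.comp hcc).sub continuous_const)).mul
      (continuous_snd.comp hcd))
  have hgc : Continuous g :=
    (continuous_const.mul (continuous_const.mul (continuous_const.max
      (continuous_const.sub hQc)))).mul hDc.neg
  have hsc : Continuous fun t => Real.sqrt (hMinus (c t) (deriv c t)) := by
    apply Real.continuous_sqrt.comp
    unfold hMinus
    apply Continuous.div
    · fun_prop
    · fun_prop
    · intro t
      exact pow_ne_zero 4 (hposx t).ne'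
  -- the pointwise bound
  have hbound : ∀ t, g t ≤ Real.sqrt (hMinus (c t) (deriv c t)) := by
    intro t
    rcases le_or_gt (r - Q t) 0 with hin | hin
    · have : g t = 0 := by simp [hgdef, max_eq_left hin]
      rw [this]
      exact Real.sqrt_nonneg _
    · -- inside the ball
      set X := (c t).1 with hXd
      set Y := (c t).2 with hYd
      set A := (deriv c t).1 with hAd
      set B := (deriv c t).2 with hBd
      have hQt : Q t < r := by linarith
      have hQnn : 0 ≤ Q t := by positivity
      have hx2 : (X - p.1) ^ 2 ≤ r := by
        have : 0 ≤ (Y - p.2) ^ 2 := sq_nonneg _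
        simp only [hQdef] at hQt
        nlinarith
      have hy2 : (Y - p.2) ^ 2 ≤ r := by
        have : 0 ≤ (X - p.1) ^ 2 := sq_nonneg _
        simp only [hQdef] at hQt
        nlinarith
      have hM : hMinus (c t) (deriv c t) = ((X * A - Y * B) ^ 2 + B ^ 2) / X ^ 4 := by
        unfold hMinus
        rw [← hXd, ← hYd, ← hAd, ← hBd]
        ring
      have hMnn : 0 ≤ hMinus (c t) (deriv c t) := hMinus_nonneg _ _ (hposx t)
      have hkey : A ^ 2 + B ^ 2 ≤ CC p * hMinus (c t) (deriv c t) := by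
        rw [hM]
        exact key_quad p hp X Y A B hx2 hy2
      have hD2 : D t ^ 2 ≤ 4 * r * (A ^ 2 + B ^ 2) := by
        have hcs : (2 * (X - p.1) * A + 2 * (Y - p.2) * B) ^ 2
            ≤ 4 * ((X - p.1) ^ 2 + (Y - p.2) ^ 2) * (A ^ 2 + B ^ 2) := by
          nlinarith [sq_nonneg ((X - p.1) * B - (Y - p.2) * A)]
        have hQle : (X - p.1) ^ 2 + (Y - p.2) ^ 2 ≤ r := by
          simp only [hQdef] at hQt; linarith
        have hD : D t = 2 * (X - p.1) * A + 2 * (Y - p.2) * B := by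
          simp only [hDdef, ← hXd, ← hYd, ← hAd, ← hBd]
        rw [hD]
        have hS : (0:ℝ) ≤ A ^ 2 + B ^ 2 := by positivity
        have h2 := mul_le_mul_of_nonneg_right hQle hS
        linarith [hcs, h2]
      have hD2x : D t ^ 2 ≤ 4 * r * CC p * hMinus (c t) (deriv c t) := by
        have h3 := mul_le_mul_of_nonneg_left hkey (by positivity : (0:ℝ) ≤ 4 * r)
        linarith [hD2, h3]
      have habs : |D t| ≤ Real.sqrt (4 * r * CC p) * Real.sqrt (hMinus (c t) (deriv c t)) := by
        rw [← Real.sqrt_sq_eq_abs, ← Real.sqrt_mul (by positivity)]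
        exact Real.sqrt_le_sqrt hD2x
      have hmaxr : max 0 (r - Q t) ≤ r := max_le hr.le (by linarith)
      have hgle : g t ≤ k * (2 * r) * |D t| := by
        have h1 : -(D t) ≤ |D t| := neg_le_abs _
        have h2 : (0:ℝ) ≤ k * (2 * max 0 (r - Q t)) := mul_nonneg hk.le (by positivity)
        have h3 : k * (2 * max 0 (r - Q t)) ≤ k * (2 * r) :=
          mul_le_mul_of_nonneg_left (by linarith) hk.le
        have h4 : g t = k * (2 * max 0 (r - Q t)) * (-(D t)) := rfl
        rw [h4]
        calc k * (2 * max 0 (r - Q t)) * (-(D t))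
            ≤ k * (2 * max 0 (r - Q t)) * |D t| := mul_le_mul_of_nonneg_left h1 h2
          _ ≤ k * (2 * r) * |D t| := mul_le_mul_of_nonneg_right h3 (abs_nonneg _)
      have hsqpos : 0 < Real.sqrt (4 * r * CC p) :=
        Real.sqrt_pos.mpr (mul_pos (mul_pos (by norm_num : (0:ℝ) < 4) hr) hC)
      have hfinal : k * (2 * r) * (Real.sqrt (4 * r * CC p)) = 1 := by
        rw [hkdef]
        unfold kk
        rw [← hrdef]
        field_simp
      calc g t ≤ k * (2 * r) * |D t| := hgle
        _ ≤ k * (2 * r) * (Real.sqrt (4 * r * CC p) * Real.sqrt (hMinus (c t) (deriv c t))) := by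
            apply mul_le_mul_of_nonneg_left habs (by positivity)
        _ = (k * (2 * r) * Real.sqrt (4 * r * CC p)) * Real.sqrt (hMinus (c t) (deriv c t)) := by
            ring
        _ = Real.sqrt (hMinus (c t) (deriv c t)) := by rw [hfinal]; ring
  -- integrate
  have hgint : IntervalIntegrable g MeasureTheory.volume a b := hgc.intervalIntegrable a b
  have hsint : IntervalIntegrable (fun t => Real.sqrt (hMinus (c t) (deriv c t)))
      MeasureTheory.volume a b := hsc.intervalIntegrable a b
  have hfsub : f b - f a = ∫ t in a..b, g t :=
    (intervalIntegral.integral_eq_sub_of_hasDerivAt (fun t _ => hf' t) hgint).symm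
  have hle : (∫ t in a..b, g t) ≤ lenMinus c a b := by
    unfold lenMinus
    exact intervalIntegral.integral_mono_on hab hgint hsint (fun t _ => hbound t)
  have hfb : f b = k * r ^ 2 := by
    have h0 : Q b = 0 := by simp [hQdef, hcb]
    simp [hfdef, h0, max_eq_right hr.le]
  have hfa : f a = 0 := by
    have h0 : Q a = (q.1 - p.1) ^ 2 + (q.2 - p.2) ^ 2 := by simp [hQdef, hca]
    have h1 : r - Q a ≤ 0 := by rw [h0]; linarith
    simp [hfdef, max_eq_left h1]
  have hδ : δδ p = k * r ^ 2 := by rw [δδ, ← hkdef, ← hrdef]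
  rw [hδ]
  calc k * r ^ 2 = f b - f a := by rw [hfb, hfa]; ring
    _ = ∫ t in a..b, g t := hfsub
    _ ≤ lenMinus c a b := hle

end LB2

lemma gamma_hasDeriv (t : ℝ) : HasDerivAt γ17 (Real.sinh t, Real.cosh t) t :=
  (Real.hasDerivAt_cosh t).prodMk (Real.hasDerivAt_sinh t)

lemma hval' (s : ℝ) (v : ℝ × ℝ) (hv : v.1 ^ 2 = Real.sinh s ^ 2) (hv2 : v.2 ^ 2 = Real.cosh s ^ 2)
    (hv3 : v.1 * v.2 = Real.sinh s * Real.cosh s) :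
    hMinus (γ17 s) v = 1 / Real.cosh s ^ 2 := by
  simp only [hMinus, γ17, hv, hv2, hv3]
  have hc := Real.cosh_pos s
  field_simp
  nlinarith [Real.cosh_sq s]

lemma hval (t : ℝ) : hMinus (γ17 t) (deriv γ17 t) = 1 / Real.cosh t ^ 2 := by
  rw [(gamma_hasDeriv t).deriv]
  exact hval' t _ rfl rfl rfl

lemma sqrt_sech (s : ℝ) : Real.sqrt (1 / Real.cosh s ^ 2) = 1 / Real.cosh s := by
  rw [one_div, Real.sqrt_inv, Real.sqrt_sq (Real.cosh_pos s).le, one_div]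

lemma speed (t : ℝ) : Real.sqrt (hMinus (γ17 t) (deriv γ17 t)) = 1 / Real.cosh t := by
  rw [hval t, sqrt_sech]

lemma len_eq (a b : ℝ) : lenMinus γ17 a b = ∫ t in a..b, 1 / Real.cosh t := by
  unfold lenMinus
  simp only [speed]

noncomputable def γrev (C : ℝ) : ℝ → ℝ × ℝ := fun t => γ17 (C - t)

lemma grev_hasDeriv (C t : ℝ) :
    HasDerivAt (γrev C) (-Real.sinh (C - t), -Real.cosh (C - t)) t := by
  have h1 : HasDerivAt (fun t : ℝ => C - t) (-1) t := (hasDerivAt_id t).const_sub C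
  have := ((gamma_hasDeriv (C - t)).scomp t h1)
  exact this.congr_deriv (by simp [Prod.smul_def])

lemma grev_contDiff (C : ℝ) : ContDiff ℝ 1 (γrev C) := by
  apply ContDiff.prodMk
  · exact Real.contDiff_cosh.comp (contDiff_const.sub contDiff_id)
  · exact Real.contDiff_sinh.comp (contDiff_const.sub contDiff_id)

lemma len_rev (C a b : ℝ) : lenMinus (γrev C) a b = ∫ t in a..b, 1 / Real.cosh (C - t) := by
  unfold lenMinus
  congr 1; funext t
  rw [(grev_hasDeriv C t).deriv]
  have h2 : γrev C t = γ17 (C - t) := rfl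
  rw [h2, hval' (C - t) _ (by ring) (by ring) (by ring), sqrt_sech]

lemma len_rev_eq (m n : ℝ) : lenMinus (γrev (m + n)) n m = ∫ t in n..m, 1 / Real.cosh t := by
  rw [len_rev]
  rw [intervalIntegral.integral_comp_sub_left (fun t : ℝ => 1 / Real.cosh t) (m + n)]
  norm_num



lemma gamma_contDiff : ContDiff ℝ 1 γ17 :=
  Real.contDiff_cosh.prodMk Real.contDiff_sinh

lemma gamma_pos (t : ℝ) : 0 < (γ17 t).1 := Real.cosh_pos t

lemma cosh_ge (t : ℝ) (ht : 0 ≤ t) : (t + 1) / 2 ≤ Real.cosh t := by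
  have h4 : t + 1 ≤ Real.exp t := Real.add_one_le_exp t
  have h5 : 0 < Real.exp (-t) := Real.exp_pos _
  rw [Real.cosh_eq]
  linarith

lemma len_nonneg (c : ℝ → ℝ × ℝ) (a b : ℝ) (hab : a ≤ b) : 0 ≤ lenMinus c a b :=
  intervalIntegral.integral_nonneg hab (fun t _ => Real.sqrt_nonneg _)

lemma distSet_bddBelow (x y : ℝ × ℝ) :
    BddBelow {L : ℝ | ∃ c : ℝ → ℝ × ℝ, ∃ a b : ℝ, a ≤ b ∧ c a = x ∧ c b = y ∧
      (∀ t : ℝ, 0 < (c t).1) ∧ ContDiff ℝ 1 c ∧ L = lenMinus c a b} := by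
  refine ⟨0, fun L hL => ?_⟩
  obtain ⟨c, a, b, hab, -, -, -, -, rfl⟩ := hL
  exact len_nonneg c a b hab

lemma distSet_nonempty (x y : ℝ × ℝ) (hx : 0 < x.1) (hy : 0 < y.1) :
    Set.Nonempty {L : ℝ | ∃ c : ℝ → ℝ × ℝ, ∃ a b : ℝ, a ≤ b ∧ c a = x ∧ c b = y ∧
      (∀ t : ℝ, 0 < (c t).1) ∧ ContDiff ℝ 1 c ∧ L = lenMinus c a b} := by
  set c : ℝ → ℝ × ℝ := fun t =>
    (x.1 * Real.exp (t * Real.log (y.1 / x.1)), x.2 + t * (y.2 - x.2)) with hcdef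
  refine ⟨lenMinus c 0 1, c, 0, 1, zero_le_one, ?_, ?_, ?_, ?_, rfl⟩
  · have : c 0 = (x.1, x.2) := by simp [hcdef]
    rw [this]
  · have h1 : Real.exp (Real.log (y.1 / x.1)) = y.1 / x.1 :=
      Real.exp_log (div_pos hy hx)
    have : c 1 = (y.1, y.2) := by
      simp only [hcdef, one_mul, h1, Prod.mk.injEq]
      constructor
      · field_simp
      · ring
    rw [this]
  · intro t
    have := Real.exp_pos (t * Real.log (y.1 / x.1))
    simp only [hcdef]
    positivity
  · apply ContDiff.prodMk
    · exact contDiff_const.mul (Real.contDiff_exp.comp (contDiff_id.mul contDiff_const))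
    · exact contDiff_const.add (contDiff_id.mul contDiff_const)

lemma distMinus_le_forward {m n : ℝ} (hmn : m ≤ n) :
    distMinus (γ17 m) (γ17 n) ≤ 2 * Real.exp (-m) := by
  have hmem : lenMinus γ17 m n ∈ {L : ℝ | ∃ c : ℝ → ℝ × ℝ, ∃ a b : ℝ, a ≤ b ∧
      c a = γ17 m ∧ c b = γ17 n ∧ (∀ t : ℝ, 0 < (c t).1) ∧ ContDiff ℝ 1 c ∧
      L = lenMinus c a b} :=
    ⟨γ17, m, n, hmn, rfl, rfl, gamma_pos, gamma_contDiff, rfl⟩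
  have h1 : distMinus (γ17 m) (γ17 n) ≤ lenMinus γ17 m n :=
    csInf_le (distSet_bddBelow _ _) hmem
  have h2 : lenMinus γ17 m n ≤ 2 * Real.exp (-m) := by
    rw [len_eq]; exact int_sech_le hmn
  linarith

lemma distMinus_le_backward {m n : ℝ} (hnm : n ≤ m) :
    distMinus (γ17 m) (γ17 n) ≤ 2 * Real.exp (-n) := by
  have hca : γrev (m + n) n = γ17 m := by
    unfold γrev; norm_num
  have hcb : γrev (m + n) m = γ17 n := by
    unfold γrev; norm_num
  have hmem : lenMinus (γrev (m + n)) n m ∈ {L : ℝ | ∃ c : ℝ → ℝ × ℝ, ∃ a b : ℝ, a ≤ b ∧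
      c a = γ17 m ∧ c b = γ17 n ∧ (∀ t : ℝ, 0 < (c t).1) ∧ ContDiff ℝ 1 c ∧
      L = lenMinus c a b} :=
    ⟨γrev (m + n), n, m, hnm, hca, hcb, fun t => Real.cosh_pos _, grev_contDiff _, rfl⟩
  have h1 : distMinus (γ17 m) (γ17 n) ≤ lenMinus (γrev (m + n)) n m :=
    csInf_le (distSet_bddBelow _ _) hmem
  have h2 : lenMinus (γrev (m + n)) n m ≤ 2 * Real.exp (-n) := by
    rw [len_rev_eq]; exact int_sech_le hnm
  linarith

/-- On the half-plane `{x > 0}`, the curve `γ(t) = (cosh t, sinh t)`,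
`t ≥ 0`, is diverging, satisfies `h(γ'(t),γ'(t)) = 1/cosh² t` and has total length
`∫₀^∞ dt/cosh t ≤ 2` for the metric `hMinus`; hence `hMinus` is incomplete. -/
theorem stmt17 :
    (∀ K : Set (ℝ × ℝ), K ⊆ {p | 0 < p.1} → IsCompact K →
      ¬ (γ17 '' Set.Ici (0:ℝ) ⊆ K)) ∧
    (∀ t : ℝ, hMinus (γ17 t) (deriv γ17 t) = 1 / Real.cosh t ^ 2) ∧
    (∀ b : ℝ, 0 ≤ b → lenMinus γ17 0 b ≤ 2) ∧
    ¬ CompleteMinus := by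
  refine ⟨?_, hval, ?_, ?_⟩
  · -- divergence
    intro K _ hK hs
    obtain ⟨R, hR⟩ := hK.isBounded.subset_closedBall 0
    set t := max 0 (2 * R) with ht
    have hmem : γ17 t ∈ K := hs ⟨t, Set.mem_Ici.mpr (le_max_left _ _), rfl⟩
    have h1 : ‖γ17 t‖ ≤ R := by
      simpa [Metric.mem_closedBall, dist_eq_norm] using hR hmem
    have h2 : Real.cosh t ≤ ‖γ17 t‖ := by
      have := norm_fst_le (γ17 t)
      simpa [γ17, Real.norm_eq_abs, abs_of_pos (Real.cosh_pos t)] using this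
    have h3 : (t + 1) / 2 ≤ Real.cosh t := cosh_ge t (le_max_left _ _)
    have : 2 * R ≤ t := le_max_right _ _
    linarith
  · -- finite length
    intro b hb
    have h1 : lenMinus γ17 0 b ≤ 2 * Real.exp (-(0:ℝ)) := by
      rw [len_eq]; exact int_sech_le hb
    simpa using h1
  · -- incompleteness
    intro hcomp
    have hcauchy : ∀ ε : ℝ, 0 < ε → ∃ N : ℕ, ∀ m ≥ N, ∀ n ≥ N,
        distMinus (γ17 m) (γ17 n) < ε := by
      intro ε hε
      obtain ⟨N, hN⟩ := exists_nat_gt (Real.log (2 / ε))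
      refine ⟨N, fun m hm n hn => ?_⟩
      have key : ∀ j : ℕ, N ≤ j → 2 * Real.exp (-(j:ℝ)) < ε := by
        intro j hj
        have h1 : Real.log (2 / ε) < (j:ℝ) := lt_of_lt_of_le hN (by exact_mod_cast hj)
        have h2 : Real.exp (-(j:ℝ)) < Real.exp (-Real.log (2 / ε)) :=
          Real.exp_lt_exp.mpr (by linarith)
        have h3 : Real.exp (-Real.log (2 / ε)) = ε / 2 := by
          rw [← Real.log_inv, Real.exp_log (by positivity)]
          rw [inv_div]
        rw [h3] at h2
        linarith
      rcases le_total (m:ℝ) (n:ℝ) with hmn | hnm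
      · have := distMinus_le_forward hmn
        have := key m hm
        linarith
      · have := distMinus_le_backward hnm
        have := key n hn
        linarith
    obtain ⟨x, hx1, hconv⟩ := hcomp (fun n => γ17 n) (fun n => gamma_pos _) hcauchy
    -- no limit point
    have hδ := δδ_pos x hx1
    obtain ⟨N₁, hN₁⟩ := hconv (δδ x) hδ
    obtain ⟨n₀, hn₀⟩ := exists_nat_gt (3 * x.1)
    set n := max N₁ n₀ with hn
    have hnN : N₁ ≤ n := le_max_left _ _
    have hcosh : x.1 + x.1 / 2 ≤ Real.cosh (n:ℝ) := by
      have h1 : (3 * x.1) ≤ (n:ℝ) := by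
        have : (n₀:ℝ) ≤ (n:ℝ) := by exact_mod_cast le_max_right N₁ n₀
        linarith
      have h2 := cosh_ge (n:ℝ) (by positivity)
      linarith
    have hq : rr x ≤ ((γ17 (n:ℝ)).1 - x.1) ^ 2 + ((γ17 (n:ℝ)).2 - x.2) ^ 2 := by
      have h1 : x.1 / 2 ≤ (γ17 (n:ℝ)).1 - x.1 := by
        simp only [γ17]; linarith
      have h2 : (x.1 / 2) ^ 2 ≤ ((γ17 (n:ℝ)).1 - x.1) ^ 2 := by nlinarith
      have h3 : (0:ℝ) ≤ ((γ17 (n:ℝ)).2 - x.2) ^ 2 := sq_nonneg _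
      unfold rr
      linarith
    have hlow : δδ x ≤ distMinus (γ17 (n:ℝ)) x := by
      apply le_csInf (distSet_nonempty _ _ (gamma_pos _) hx1)
      rintro L ⟨c, a, b, hab, hca, hcb, hposx, hc, rfl⟩
      exact len_lower x hx1 (γ17 (n:ℝ)) hq c a b hab hca hcb hposx hc
    have hup := hN₁ n hnN
    linarith
end
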